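/- Let K be a semiring, (Σ,M) and (Γ,M') OP alphabets, S:(Σ,M)^+→K a regular (respectively strictly regular) series, and h:Σ→Γ an OPM-preserving projection. Then the series h(S):(Γ,M')^+→K, defined by h(S)(v)=Σ_{w∈(Σ,M)^+, h(w)=v} S(w), is regular (respectively strictly regular). -/

import Mathlib

namespace WOP

/-- Precedence relations: yields precedence, equal in precedence, takes precedence. -/
inductive PrecRel where
  | lt | eq | gt
deriving DecidableEq

/-- An operator precedence matrix on `Σ ∪ {#}`, where `none` encodes `#`.
It assigns at most one precedence relation to each ordered pair, with
`# ⋖ a` and `a ⋗ #` for every letter `a`. -/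
structure OPM (A : Type) where
  rel : Option A → Option A → Option PrecRel
  hash_lt : ∀ a : A, rel none (some a) = some .lt
  hash_gt : ∀ a : A, rel (some a) none = some .gt

variable {A B K : Type}

/-- The letter of `#w#` at position `i` (positions `0` and `> |w|` carry `#`, i.e. `none`). -/
def letterAt (w : List A) (i : ℕ) : Option A :=
  if i = 0 then none else w[i - 1]?

section ChainRel

variable (M : OPM A) (L : ℕ → Option A)

mutual
  /-- `ChainMid M L k j`: there are `k = k_s < ... < k_m = j` with
  `L k_s ≐ L k_{s+1} ≐ ... ≐ L k_{m-1} ⋗ L k_m` and the gap condition between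
  consecutive elements. -/
  inductive ChainMid : ℕ → ℕ → Prop where
    | last {k j : ℕ} : M.rel (L k) (L j) = some .gt → ChainGap k j → ChainMid k j
    | step {k k' j : ℕ} : M.rel (L k) (L k') = some .eq → ChainGap k k' →
        ChainMid k' j → ChainMid k j

  /-- The gap condition between consecutive elements of a chain:
  adjacent positions or a chain. -/
  inductive ChainGap : ℕ → ℕ → Prop where
    | adj (k : ℕ) : ChainGap k (k + 1)
    | chain {k k' : ℕ} : Chain k k' → ChainGap k k'

  /-- The chain relation `i ⤳ j`: there are positions `i = k_1 < ... < k_m = j` with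
  `L k_1 ⋖ L k_2 ≐ ... ≐ L k_{m-1} ⋗ L k_m` such that consecutive `k`'s are adjacent
  or themselves related by `⤳`. -/
  inductive Chain : ℕ → ℕ → Prop where
    | mk {i k j : ℕ} : M.rel (L i) (L k) = some .lt → ChainGap i k → ChainMid k j →
        Chain i j
end

end ChainRel

/-- `(Σ,M)^+`: the set of nonempty words compatible with `M`, i.e. `0 ⤳ |w|+1` in `#w#`. -/
def OPWords (M : OPM A) : Set (List A) :=
  {w | w ≠ [] ∧ Chain M (letterAt w) 0 (w.length + 1)}

/-- An (unweighted) operator precedence automaton over the alphabet `A`. -/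
structure OPA (A : Type) where
  Q : Type
  fin : Fintype Q
  I : Set Q
  F : Set Q
  δpush : Set (Q × A × Q)
  δshift : Set (Q × A × Q)
  δpop : Set (Q × Q × Q)

/-- A weighted operator precedence automaton over the alphabet `A` and weights in `K`. -/
structure WOPA (A K : Type) extends OPA A where
  wtpush : Q × A × Q → K
  wtshift : Q × A × Q → K
  wtpop : Q × Q × Q → K

/-- A configuration: a stack of (symbol, state) pairs, a current state,
and the remaining input. -/
structure Config (A Q : Type) where
  stack : List (A × Q)
  state : Q
  input : List A

/-- The moves (transitions) an OPA may take. -/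
inductive Move (A Q : Type) where
  | push (q : Q) (b : A) (r : Q)
  | shift (q : Q) (b : A) (r : Q)
  | pop (q p r : Q)

/-- The topmost stack symbol (`none` = `#` for the empty stack). -/
def topSym {Q : Type} (st : List (A × Q)) : Option A := st.head?.map Prod.fst

/-- One step of an OPA on an OP alphabet `(A, M)`. -/
inductive Exec (M : OPM A) (T : OPA A) : Config A T.Q → Move A T.Q → Config A T.Q → Prop where
  | push {st : List (A × T.Q)} {q r : T.Q} {b : A} {x : List A} :
      M.rel (topSym st) (some b) = some .lt → (q, b, r) ∈ T.δpush →
      Exec M T ⟨st, q, b :: x⟩ (.push q b r) ⟨(b, q) :: st, r, x⟩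
  | shift {st : List (A × T.Q)} {p q r : T.Q} {a b : A} {x : List A} :
      M.rel (some a) (some b) = some .eq → (q, b, r) ∈ T.δshift →
      Exec M T ⟨(a, p) :: st, q, b :: x⟩ (.shift q b r) ⟨(b, p) :: st, r, x⟩
  | pop {st : List (A × T.Q)} {p q r : T.Q} {a : A} {x : List A} :
      M.rel (some a) x.head? = some .gt → (q, p, r) ∈ T.δpop →
      Exec M T ⟨(a, p) :: st, q, x⟩ (.pop q p r) ⟨st, r, x⟩

/-- Execution of a sequence of moves. -/
inductive ExecList (M : OPM A) (T : OPA A) :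
    Config A T.Q → List (Move A T.Q) → Config A T.Q → Prop where
  | nil (c : Config A T.Q) : ExecList M T c [] c
  | cons {c c' c'' : Config A T.Q} {m : Move A T.Q} {ms : List (Move A T.Q)} :
      Exec M T c m c' → ExecList M T c' ms c'' → ExecList M T c (m :: ms) c''

/-- The weight of a move of a weighted OPA. -/
def moveWt [Semiring K] (W : WOPA A K) : Move A W.Q → K
  | .push q b r => W.wtpush (q, b, r)
  | .shift q b r => W.wtshift (q, b, r)
  | .pop q p r => W.wtpop (q, p, r)

/-- The accepting runs of an OPA on `w`: an initial state, a sequence of moves from the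
initial configuration (empty stack, whole input) to a final configuration
(empty stack, input read), and the final state reached. -/
def AccRuns (M : OPM A) (T : OPA A) (w : List A) : Set (T.Q × List (Move A T.Q) × T.Q) :=
  {ρ | ρ.1 ∈ T.I ∧ ρ.2.2 ∈ T.F ∧ ExecList M T ⟨[], ρ.1, w⟩ ρ.2.1 ⟨[], ρ.2.2, []⟩}

/-- The behavior `⟦W⟧(w)`: the sum over all accepting runs of `W` on `w` of the product
(in order) of the weights of the moves of the run. -/
noncomputable def behavior [Semiring K] (M : OPM A) (W : WOPA A K) (w : List A) : K :=
  ∑ᶠ ρ ∈ AccRuns M W.toOPA w, (ρ.2.1.map (moveWt W)).prod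

/-- A weighted OPA is restricted (an rwOPA) if all pop weights are `1`. -/
def Restricted [Semiring K] (W : WOPA A K) : Prop := ∀ t ∈ W.δpop, W.wtpop t = 1

/-- A series `S : (Σ,M)^+ → K` is regular if it is the behavior of some wOPA. -/
def Regular [Semiring K] (M : OPM A) (S : List A → K) : Prop :=
  ∃ W : WOPA A K, ∀ w ∈ OPWords M, S w = behavior M W w

/-- A series is strictly regular if it is the behavior of some restricted wOPA. -/
def StrictlyRegular [Semiring K] (M : OPM A) (S : List A → K) : Prop :=
  ∃ W : WOPA A K, Restricted W ∧ ∀ w ∈ OPWords M, S w = behavior M W w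

/-- Unweighted acceptance. -/
def Accepts (M : OPM A) (T : OPA A) (w : List A) : Prop :=
  ∃ qI ms qF, qI ∈ T.I ∧ qF ∈ T.F ∧ ExecList M T ⟨[], qI, w⟩ ms ⟨[], qF, []⟩

/-- A language `L ⊆ (Σ,M)^+` is an operator precedence language if it is the set of
compatible words accepted by some OPA. -/
def IsOPL (M : OPM A) (L : Set (List A)) : Prop :=
  ∃ T : OPA A, L = {w | w ∈ OPWords M ∧ Accepts M T w}

/-- The intersection `S ∩ L` of a series with a language. -/
noncomputable def interSeries [Semiring K] (S : List A → K) (L : Set (List A))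
    (w : List A) : K :=
  open Classical in if w ∈ L then S w else 0

/-- `h : Σ → Γ` is OPM-preserving: `a ⊙ b` iff `h(a) ⊙ h(b)` for every relation `⊙`. -/
def OPMPreserving (M : OPM A) (M' : OPM B) (h : A → B) : Prop :=
  ∀ a b : A, M.rel (some a) (some b) = M'.rel (some (h a)) (some (h b))

/-- The image series `h(S)(v) = ∑_{w ∈ (Σ,M)^+, h(w) = v} S(w)`. -/
noncomputable def mapSeries [Semiring K] (M : OPM A) (h : A → B) (S : List A → K)
    (v : List B) : K :=
  ∑ᶠ w ∈ {w | w ∈ OPWords M ∧ w.map h = v}, S w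

/-- The pullback OPM `h⁻¹(M)` along `h : Σ' → Σ`. -/
def pullOPM (M : OPM A) (h : B → A) : OPM B where
  rel o₁ o₂ := M.rel (o₁.map h) (o₂.map h)
  hash_lt b := M.hash_lt (h b)
  hash_gt b := M.hash_gt (h b)

/-- The Nivat class `N(Σ,M,K)`: series obtained from a one-state restricted wOPA over a
pulled-back OP alphabet, intersected with an OPL, followed by the projection. -/
def NivatClass [Semiring K] (M : OPM A) (S : List A → K) : Prop :=
  ∃ (B : Type) (_ : Fintype B) (h : B → A) (W : WOPA B K) (L : Set (List B)),
    Restricted W ∧ (∃ q₀ : W.Q, ∀ q : W.Q, q = q₀) ∧ IsOPL (pullOPM M h) L ∧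
    ∀ v ∈ OPWords M,
      S v = mapSeries (pullOPM M h) h (interSeries (behavior (pullOPM M h) W) L) v

/-- An OPL step function: a finite sum `∑ kᵢ · 1_{Lᵢ}` with the `Lᵢ` OPLs forming a
partition of `(Σ,M)^+`. -/
def IsOPLStep [Semiring K] (M : OPM A) (S : List A → K) : Prop :=
  ∃ (n : ℕ) (k : Fin n → K) (L : Fin n → Set (List A)),
    (∀ i, IsOPL M (L i)) ∧ (∀ i j, i ≠ j → Disjoint (L i) (L j)) ∧
    (⋃ i, L i) = OPWords M ∧ ∀ i, ∀ w ∈ L i, S w = k i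

/-!
The projected automaton `W.proj h a₀` reads `h a` where `W` reads `a`, guessing the preimage,
and stores the guessed letter in its state. An accepting run on `v` therefore determines a word
`w` with `h w = v` and an accepting run of `W` on `w` of the same weight, and conversely; since
`h` preserves the precedence matrix, both automata enable the same moves. Summing over runs gives
`⟦W.proj h a₀⟧ v = ∑_{h w = v} ⟦W⟧ w`, which is `h(S)(v)` because every preimage of a compatible
word is compatible. Pop weights are copied, so restricted automata stay restricted.
-/

theorem letterAt_map (h : A → B) (w : List A) (i : ℕ) :
    letterAt (w.map h) i = (letterAt w i).map h := by
  unfold letterAt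
  split_ifs <;> simp

theorem OPMPreserving.rel_map {M : OPM A} {M' : OPM B} {h : A → B} (hp : OPMPreserving M M' h)
    {o₁ o₂ : Option A} (hne : o₁ ≠ none ∨ o₂ ≠ none) :
    M'.rel (o₁.map h) (o₂.map h) = M.rel o₁ o₂ := by
  rcases o₁ with _ | a <;> rcases o₂ with _ | b
  · simp at hne
  · simp [M.hash_lt, M'.hash_lt]
  · simp [M.hash_gt, M'.hash_gt]
  · exact (hp a b).symm

theorem ChainMid.rel_none_none {M : OPM A} {L : ℕ → Option A} {k j : ℕ} :
    ChainMid M L k j → L k = none → M.rel none none = some .gt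
  | .last hr _, hk => by
    cases hj : L j with
    | none => rwa [hk, hj] at hr
    | some b => rw [hk, hj, M.hash_lt] at hr; cases hr
  | .step (k' := k') hr _ hm, hk => by
    cases hk' : L k' with
    | none =>
      rw [hk, hk'] at hr
      cases hr.symm.trans (hm.rel_none_none hk')
    | some b => rw [hk, hk', M.hash_lt] at hr; cases hr

section ChainOfMap

variable {M : OPM A} {M' : OPM B} {h : A → B} {L : ℕ → Option A}

mutual

theorem ChainMid.of_map (hp : OPMPreserving M M' h) {k j : ℕ} :
    ChainMid M' (Option.map h ∘ L) k j → L k ≠ none → ChainMid M L k j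
  | .last hr hg, hk => .last ((hp.rel_map (.inl hk)).symm.trans hr) (hg.of_map hp)
  | .step (k' := k') hr hg hm, hk => by
    have hk' : L k' ≠ none := by
      intro hn
      obtain ⟨a, ha⟩ := Option.ne_none_iff_exists'.mp hk
      simp only [Function.comp_apply, ha, hn, Option.map_some, Option.map_none,
        M'.hash_gt] at hr
      cases hr
    exact .step ((hp.rel_map (.inl hk)).symm.trans hr) (hg.of_map hp) (hm.of_map hp hk')

theorem ChainGap.of_map (hp : OPMPreserving M M' h) {k j : ℕ} :
    ChainGap M' (Option.map h ∘ L) k j → ChainGap M L k j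
  | .adj k => .adj k
  | .chain hc => .chain (hc.of_map hp)

theorem Chain.of_map (hp : OPMPreserving M M' h) {i j : ℕ} :
    Chain M' (Option.map h ∘ L) i j → Chain M L i j
  | .mk (k := k) hr hg hm => by
    -- `k` is no `#`: otherwise `i` is one too (as `a ⋗ #`), and `# ⋖ #` contradicts the
    -- `# ⋗ #` that `hm` forces.
    have hk : L k ≠ none := by
      intro hn
      have hi : L i = none := by
        cases hi : L i with
        | none => rfl
        | some a => simp only [Function.comp_apply, hi, hn, Option.map_some, Option.map_none,
            M'.hash_gt] at hr; cases hr
      simp only [Function.comp_apply, hi, hn, Option.map_none] at hr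
      have := hm.rel_none_none (by simp [hn])
      cases hr.symm.trans this
    exact .mk ((hp.rel_map (.inr hk)).symm.trans hr) (hg.of_map hp) (hm.of_map hp hk)

end

end ChainOfMap

theorem mem_opWords_of_map {M : OPM A} {M' : OPM B} {h : A → B} (hp : OPMPreserving M M' h)
    {w : List A} (hw : w.map h ∈ OPWords M') : w ∈ OPWords M := by
  obtain ⟨hne, hc⟩ := hw
  refine ⟨by simpa using hne, ?_⟩
  rw [List.length_map, show letterAt (w.map h) = Option.map h ∘ letterAt w from
    funext (letterAt_map h w)] at hc
  exact hc.of_map hp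

section Runs

variable {M : OPM A} {T : OPA A}

instance Move.finite {Q : Type} [Finite A] [Finite Q] : Finite (Move A Q) :=
  Finite.of_injective
    (fun m => match m with
      | .push q b r => (Sum.inl (q, b, r) : (Q × A × Q) ⊕ (Q × A × Q) ⊕ (Q × Q × Q))
      | .shift q b r => Sum.inr (Sum.inl (q, b, r))
      | .pop q p r => Sum.inr (Sum.inr (q, p, r)))
    (by intro m₁ m₂ hm; cases m₁ <;> cases m₂ <;> simp_all)

theorem ExecList.length_add_le {c c' : Config A T.Q} {ms : List (Move A T.Q)}
    (hx : ExecList M T c ms c') :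
    ms.length + 2 * c'.input.length + c'.stack.length ≤ 2 * c.input.length + c.stack.length := by
  induction hx with
  | nil => simp
  | cons hstep _ ih => cases hstep <;> simp only [List.length_cons] at ih ⊢ <;> omega

theorem AccRuns.finite [Finite A] [Finite T.Q] (w : List A) : (AccRuns M T w).Finite := by
  refine (Set.finite_univ.prod ((List.finite_length_le _ (2 * w.length)).prod
    Set.finite_univ)).subset ?_
  rintro ⟨qI, ms, qF⟩ ⟨-, -, hx⟩
  have := hx.length_add_le
  simp only [List.length_nil] at this
  exact ⟨trivial, show ms.length ≤ 2 * w.length by omega, trivial⟩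

theorem Exec.det {c c₁ c₂ : Config A T.Q} {m : Move A T.Q}
    (h₁ : Exec M T c m c₁) (h₂ : Exec M T c m c₂) : c₁ = c₂ := by
  cases h₁ <;> cases h₂ <;> rfl

theorem ExecList.det {c c₁ c₂ : Config A T.Q} {ms : List (Move A T.Q)}
    (h₁ : ExecList M T c ms c₁) (h₂ : ExecList M T c ms c₂) : c₁ = c₂ := by
  induction h₁ generalizing c₂ with
  | nil => cases h₂; rfl
  | cons hstep _ ih =>
    cases h₂ with
    | cons hstep' hrest' => exact ih (hstep.det hstep' ▸ hrest')

def Move.word {Q : Type} (ms : List (Move A Q)) : List A :=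
  ms.filterMap fun
    | .push _ b _ => some b
    | .shift _ b _ => some b
    | .pop _ _ _ => none

theorem ExecList.input_eq_word_append {c c' : Config A T.Q} {ms : List (Move A T.Q)}
    (hx : ExecList M T c ms c') : c.input = Move.word ms ++ c'.input := by
  induction hx with
  | nil => simp [Move.word]
  | cons hstep _ ih => cases hstep <;> simpa [Move.word] using ih

theorem AccRuns.pairwiseDisjoint (s : Set (List A)) :
    s.PairwiseDisjoint (AccRuns M T) := by
  intro w₁ _ w₂ _ hne
  refine Set.disjoint_left.mpr fun ρ h₁ h₂ => hne ?_
  simpa using h₁.2.2.input_eq_word_append.trans h₂.2.2.input_eq_word_append.symm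

end Runs

/-- States of `W.proj h a₀` carry the last guessed letter of `A` (initially `a₀`). Push and shift
moves record it in their target state, so distinct preimages under `h` give distinct runs; pops
keep it, so each run of `W` lifts to exactly one run. -/
abbrev WOPA.proj [Fintype A] (W : WOPA A K) (h : A → B) (a₀ : A) : WOPA B K where
  Q := W.Q × A
  fin := haveI := W.fin; inferInstance
  I := {p | p.1 ∈ W.I ∧ p.2 = a₀}
  F := {p | p.1 ∈ W.F}
  δpush := {t | h t.2.2.2 = t.2.1 ∧ (t.1.1, t.2.2.2, t.2.2.1) ∈ W.δpush}
  δshift := {t | h t.2.2.2 = t.2.1 ∧ (t.1.1, t.2.2.2, t.2.2.1) ∈ W.δshift}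
  δpop := {t | t.2.2.2 = t.1.2 ∧ (t.1.1, t.2.1.1, t.2.2.1) ∈ W.δpop}
  wtpush t := W.wtpush (t.1.1, t.2.2.2, t.2.2.1)
  wtshift t := W.wtshift (t.1.1, t.2.2.2, t.2.2.1)
  wtpop t := W.wtpop (t.1.1, t.2.1.1, t.2.2.1)

/-- The move of `W` underlying a move of `W.proj h a₀`. -/
def Move.erase {Q : Type} : Move B (Q × A) → Move A Q
  | .push q _ r => .push q.1 r.2 r.1
  | .shift q _ r => .shift q.1 r.2 r.1
  | .pop q p r => .pop q.1 p.1 r.1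

/-- The stack of `W.proj h a₀` over a stack of `W`, with `ys` the letters stored in the states. -/
def liftStack {Q : Type} (h : A → B) : List (A × Q) → List A → List (B × (Q × A))
  | (a, p) :: st, y :: ys => (h a, (p, y)) :: liftStack h st ys
  | _, _ => []

def eraseRun {Q : Type} (ρ : (Q × A) × List (Move B (Q × A)) × (Q × A)) :
    Q × List (Move A Q) × Q :=
  (ρ.1.1, ρ.2.1.map Move.erase, ρ.2.2.1)

theorem topSym_liftStack {Q : Type} {h : A → B} {st : List (A × Q)} {ys : List A}
    (hl : ys.length = st.length) : topSym (liftStack h st ys) = (topSym st).map h := by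
  rcases st with _ | ⟨⟨a, p⟩, st⟩ <;> rcases ys with _ | ⟨y, ys⟩ <;> first | rfl | simp at hl

theorem liftStack_eq_cons {Q : Type} {h : A → B} {st : List (A × Q)} {ys : List A}
    {e : B × (Q × A)} {stk : List (B × (Q × A))} (hc : liftStack h st ys = e :: stk) :
    ∃ a p y st₀ ys₀, st = (a, p) :: st₀ ∧ ys = y :: ys₀ ∧ e = (h a, (p, y)) ∧
      stk = liftStack h st₀ ys₀ := by
  rcases st with _ | ⟨⟨a, p⟩, st⟩ <;> rcases ys with _ | ⟨y, ys⟩ <;> simp only [liftStack,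
    reduceCtorEq, List.cons.injEq] at hc
  exact ⟨a, p, y, st, ys, rfl, rfl, hc.1.symm, hc.2.symm⟩

theorem eq_nil_of_liftStack_eq_nil {Q : Type} {h : A → B} {st : List (A × Q)} {ys : List A}
    (hl : ys.length = st.length) (hn : liftStack h st ys = []) : st = [] := by
  rcases st with _ | ⟨⟨a, p⟩, st⟩ <;> rcases ys with _ | ⟨y, ys⟩ <;> simp_all [liftStack]

section Projection

variable [Fintype A] {M : OPM A} {M' : OPM B} {h : A → B} {W : WOPA A K} {a₀ : A}

theorem Restricted.proj [Semiring K] (hW : Restricted W) : Restricted (W.proj h a₀) :=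
  fun _ ht => hW _ ht.2

theorem moveWt_proj [Semiring K] : moveWt (W.proj h a₀) = moveWt W ∘ Move.erase := by
  ext m
  cases m <;> rfl

theorem Exec.proj (hp : OPMPreserving M M' h) {c c' : Config A W.Q} {m : Move A W.Q}
    (hx : Exec M W.toOPA c m c') (x : A) {ys : List A} (hl : ys.length = c.stack.length) :
    ∃ m' x' ys', ys'.length = c'.stack.length ∧ m'.erase = m ∧
      Exec M' (W.proj h a₀).toOPA ⟨liftStack h c.stack ys, (c.state, x), c.input.map h⟩ m'
        ⟨liftStack h c'.stack ys', (c'.state, x'), c'.input.map h⟩ := by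
  cases hx with
  | @push st q r b xs hr hmem =>
    refine ⟨.push (q, x) (h b) (r, b), b, x :: ys, by simpa using hl, rfl, Exec.push ?_ ⟨rfl, hmem⟩⟩
    exact (congrArg (M'.rel · _) (topSym_liftStack hl)).trans
      ((hp.rel_map (.inr (Option.some_ne_none b))).trans hr)
  | @shift st p q r a b xs hr hmem =>
    obtain _ | ⟨y, ys⟩ := ys
    · simp at hl
    refine ⟨.shift (q, x) (h b) (r, b), b, y :: ys, hl, rfl, Exec.shift ?_ ⟨rfl, hmem⟩⟩
    rwa [← hp a b]
  | @pop st p q r a xs hr hmem =>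
    obtain _ | ⟨y, ys⟩ := ys
    · simp at hl
    refine ⟨.pop (q, x) (p, y) (r, x), x, ys, by simpa using hl, rfl, Exec.pop ?_ ⟨rfl, hmem⟩⟩
    rw [List.head?_map]
    exact (hp.rel_map (.inl (Option.some_ne_none a))).trans hr

theorem ExecList.proj (hp : OPMPreserving M M' h) {c c' : Config A W.Q} {ms : List (Move A W.Q)}
    (hx : ExecList M W.toOPA c ms c') (x : A) {ys : List A} (hl : ys.length = c.stack.length) :
    ∃ ms' x' ys', ms'.map Move.erase = ms ∧
      ExecList M' (W.proj h a₀).toOPA ⟨liftStack h c.stack ys, (c.state, x), c.input.map h⟩ ms'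
        ⟨liftStack h c'.stack ys', (c'.state, x'), c'.input.map h⟩ := by
  induction hx generalizing x ys with
  | nil c => exact ⟨[], x, ys, rfl, .nil _⟩
  | cons hstep _ ih =>
    obtain ⟨m', x₁, ys₁, hl₁, rfl, hstep'⟩ := hstep.proj (a₀ := a₀) hp x hl
    obtain ⟨ms', x₂, ys₂, rfl, hrest'⟩ := ih x₁ hl₁
    exact ⟨m' :: ms', x₂, ys₂, rfl, .cons hstep' hrest'⟩

theorem Exec.of_proj (hp : OPMPreserving M M' h) {st : List (A × W.Q)} {ys : List A} {q : W.Q}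
    {x : A} {v : List B} {m' : Move B (W.proj h a₀).Q} {d : Config B (W.proj h a₀).Q}
    (hx : Exec M' (W.proj h a₀).toOPA ⟨liftStack h st ys, (q, x), v⟩ m' d)
    (hl : ys.length = st.length) :
    ∃ st₂ ys₂ q₂ x₂ u v₂, d = ⟨liftStack h st₂ ys₂, (q₂, x₂), v₂⟩ ∧ v = u.map h ++ v₂ ∧
      ys₂.length = st₂.length ∧
      ∀ w₂, w₂.map h = v₂ → Exec M W.toOPA ⟨st, q, u ++ w₂⟩ m'.erase ⟨st₂, q₂, w₂⟩ := by
  generalize hc : (⟨liftStack h st ys, (q, x), v⟩ : Config B (W.proj h a₀).Q) = c at hx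
  cases hx with
  | @push stk qx rb b' xs hr hmem =>
    obtain ⟨r, b⟩ := rb
    obtain ⟨hb, hmem⟩ := hmem
    dsimp only at hb hmem
    subst hb
    simp only [Config.mk.injEq] at hc
    obtain ⟨rfl, rfl, rfl⟩ := hc
    refine ⟨(b, q) :: st, x :: ys, r, b, [b], xs, rfl, rfl, by simpa using hl,
      fun w₂ _ => Exec.push ?_ hmem⟩
    rw [← hp.rel_map (.inr (Option.some_ne_none b))]
    exact (congrArg (M'.rel · _) (topSym_liftStack hl)).symm.trans hr
  | @shift stk pp qx rb a' b' xs hr hmem =>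
    obtain ⟨r, b⟩ := rb
    obtain ⟨hb, hmem⟩ := hmem
    dsimp only at hb hmem
    subst hb
    simp only [Config.mk.injEq] at hc
    obtain ⟨hstk, rfl, rfl⟩ := hc
    obtain ⟨a, p, y, st, ys, rfl, rfl, he, rfl⟩ := liftStack_eq_cons hstk
    simp only [Prod.mk.injEq] at he
    obtain ⟨rfl, rfl⟩ := he
    refine ⟨(b, p) :: st, y :: ys, r, b, [b], xs, rfl, rfl, hl, fun w₂ _ => Exec.shift ?_ hmem⟩
    rwa [hp a b]
  | @pop stk pp qx rx a' xs hr hmem =>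
    obtain ⟨r, x'⟩ := rx
    obtain ⟨hb, hmem⟩ := hmem
    dsimp only at hb hmem
    subst hb
    simp only [Config.mk.injEq] at hc
    obtain ⟨hstk, rfl, rfl⟩ := hc
    obtain ⟨a, p, y, st, ys, rfl, rfl, he, rfl⟩ := liftStack_eq_cons hstk
    simp only [Prod.mk.injEq] at he
    obtain ⟨rfl, rfl⟩ := he
    refine ⟨st, ys, r, x, [], v, rfl, rfl, by simpa using hl, fun w₂ hw => Exec.pop ?_ hmem⟩
    rw [← hp.rel_map (.inl (Option.some_ne_none a)), List.nil_append, ← List.head?_map, hw]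
    exact hr

theorem ExecList.of_proj (hp : OPMPreserving M M' h) {st : List (A × W.Q)} {ys : List A}
    {q : W.Q} {x : A} {v : List B} {ms' : List (Move B (W.proj h a₀).Q)}
    {d : Config B (W.proj h a₀).Q}
    (hx : ExecList M' (W.proj h a₀).toOPA ⟨liftStack h st ys, (q, x), v⟩ ms' d)
    (hl : ys.length = st.length) :
    ∃ st₂ ys₂ q₂ x₂ u v₂, d = ⟨liftStack h st₂ ys₂, (q₂, x₂), v₂⟩ ∧ v = u.map h ++ v₂ ∧
      ys₂.length = st₂.length ∧ ∀ w₂, w₂.map h = v₂ →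
        ExecList M W.toOPA ⟨st, q, u ++ w₂⟩ (ms'.map Move.erase) ⟨st₂, q₂, w₂⟩ := by
  generalize hc : (⟨liftStack h st ys, (q, x), v⟩ : Config B (W.proj h a₀).Q) = c at hx
  induction hx generalizing st ys q x v with
  | nil => exact ⟨st, ys, q, x, [], v, hc.symm, rfl, hl, fun w₂ _ => .nil _⟩
  | cons hstep _ ih =>
    subst hc
    obtain ⟨st₁, ys₁, q₁, x₁, u₁, v₁, rfl, rfl, hl₁, hstep'⟩ := hstep.of_proj hp hl
    obtain ⟨st₂, ys₂, q₂, x₂, u₂, v₂, rfl, rfl, hl₂, hrest'⟩ := ih hl₁ rfl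
    refine ⟨st₂, ys₂, q₂, x₂, u₁ ++ u₂, v₂, rfl, by simp, hl₂, fun w₂ hw => .cons ?_ (hrest' w₂ hw)⟩
    simpa using hstep' (u₂ ++ w₂) (by simp [hw])

theorem Exec.eq_of_erase_eq {c c₁ c₂ : Config B (W.proj h a₀).Q} {m₁ m₂ : Move B (W.proj h a₀).Q}
    (h₁ : Exec M' (W.proj h a₀).toOPA c m₁ c₁) (h₂ : Exec M' (W.proj h a₀).toOPA c m₂ c₂)
    (he : m₁.erase = m₂.erase) : m₁ = m₂ := by
  cases h₁ <;> cases h₂ <;> simp_all [Move.erase, WOPA.proj, Prod.ext_iff]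

theorem ExecList.eq_of_map_erase_eq {c c₁ c₂ : Config B (W.proj h a₀).Q}
    {ms₁ ms₂ : List (Move B (W.proj h a₀).Q)}
    (h₁ : ExecList M' (W.proj h a₀).toOPA c ms₁ c₁) (h₂ : ExecList M' (W.proj h a₀).toOPA c ms₂ c₂)
    (he : ms₁.map Move.erase = ms₂.map Move.erase) : ms₁ = ms₂ := by
  induction h₁ generalizing ms₂ with
  | nil => exact (List.map_eq_nil_iff.mp he.symm).symm
  | cons hstep _ ih =>
    cases h₂ with
    | nil => cases he
    | cons hstep' hrest' =>
      obtain ⟨hm, hms⟩ := List.cons.inj he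
      obtain rfl := hstep.eq_of_erase_eq hstep' hm
      rw [ih (hstep.det hstep' ▸ hrest') hms]

theorem injOn_eraseRun (v : List B) : Set.InjOn eraseRun (AccRuns M' (W.proj h a₀).toOPA v) := by
  rintro ⟨⟨q, x₁⟩, ms₁, f₁⟩ ⟨hI₁, -, hx₁⟩ ⟨⟨q₂, x₂⟩, ms₂, f₂⟩ ⟨hI₂, -, hx₂⟩ he
  simp only [eraseRun, Prod.mk.injEq] at he
  obtain ⟨rfl, hms, -⟩ := he
  obtain rfl : x₁ = x₂ := hI₁.2.trans hI₂.2.symm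
  obtain rfl := hx₁.eq_of_map_erase_eq hx₂ hms
  obtain ⟨-, rfl, -⟩ := Config.mk.inj (hx₁.det hx₂)
  rfl

theorem image_eraseRun (hp : OPMPreserving M M' h) (v : List B) :
    eraseRun '' AccRuns M' (W.proj h a₀).toOPA v =
      ⋃ w ∈ {w | w.map h = v}, AccRuns M W.toOPA w := by
  ext ⟨q, ms, f⟩
  simp only [Set.mem_image, Set.mem_iUnion, Set.mem_ofPred_eq, exists_prop]
  constructor
  · rintro ⟨⟨⟨q, x⟩, ms', f'⟩, ⟨⟨hq, hx₀⟩, hf, hx⟩, he⟩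
    obtain rfl : x = a₀ := hx₀
    obtain ⟨st, ys, q₂, x₂, u, v₂, hd, hv, hl, hx'⟩ :=
      ExecList.of_proj (st := []) (ys := []) hp hx rfl
    obtain ⟨hst, rfl, rfl⟩ := Config.mk.inj hd
    obtain rfl := eq_nil_of_liftStack_eq_nil hl hst.symm
    simp only [eraseRun, Prod.mk.injEq] at he
    obtain ⟨rfl, rfl, rfl⟩ := he
    exact ⟨u, by simpa using hv.symm, hq, hf, by simpa using hx' [] rfl⟩
  · rintro ⟨w, rfl, hq, hf, hx⟩
    obtain ⟨ms', x', ys', rfl, hx'⟩ := hx.proj (a₀ := a₀) hp a₀ (ys := []) rfl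
    exact ⟨((q, a₀), ms', (f, x')), ⟨⟨hq, rfl⟩, hf, hx'⟩, rfl⟩

theorem behavior_proj [Semiring K] (hp : OPMPreserving M M' h) (v : List B) :
    behavior M' (W.proj h a₀) v = ∑ᶠ w ∈ {w | w.map h = v}, behavior M W w := by
  have := W.fin
  have hfin : {w : List A | w.map h = v}.Finite :=
    (List.finite_length_eq A v.length).subset fun w (hw : w.map h = v) => by
      rw [Set.mem_ofPred_eq, ← hw, List.length_map]
  calc behavior M' (W.proj h a₀) v
      = ∑ᶠ ρ ∈ AccRuns M' (W.proj h a₀).toOPA v, ((eraseRun ρ).2.1.map (moveWt W)).prod :=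
        finsum_mem_congr rfl fun ρ _ => by simp [eraseRun, moveWt_proj]
    _ = ∑ᶠ ρ ∈ ⋃ w ∈ {w | w.map h = v}, AccRuns M W.toOPA w, (ρ.2.1.map (moveWt W)).prod := by
        rw [← image_eraseRun hp, finsum_mem_image (injOn_eraseRun v)]
    _ = ∑ᶠ w ∈ {w | w.map h = v}, behavior M W w :=
        finsum_mem_biUnion (AccRuns.pairwiseDisjoint _) hfin fun w _ => AccRuns.finite w

theorem mapSeries_eq_behavior_proj [Semiring K] (hp : OPMPreserving M M' h) {S : List A → K}
    (hS : ∀ w ∈ OPWords M, S w = behavior M W w) {v : List B} (hv : v ∈ OPWords M') :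
    mapSeries M h S v = behavior M' (W.proj h a₀) v := by
  rw [mapSeries, behavior_proj hp]
  refine finsum_mem_congr ?_ fun w hw => hS w (mem_opWords_of_map hp (hw ▸ hv))
  ext w
  exact ⟨And.right, fun hw => ⟨mem_opWords_of_map hp (hw ▸ hv), hw⟩⟩

end Projection

def WOPA.empty (A K : Type) : WOPA A K where
  Q := Empty
  fin := inferInstance
  I := ∅
  F := ∅
  δpush := ∅
  δshift := ∅
  δpop := ∅
  wtpush t := t.1.elim
  wtshift t := t.1.elim
  wtpop t := t.1.elim

theorem behavior_empty [Semiring K] (M : OPM A) (w : List A) :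
    behavior M (WOPA.empty A K) w = 0 :=
  finsum_mem_eq_zero_of_forall_eq_zero fun ρ _ => Empty.elim ρ.1

theorem mapSeries_of_isEmpty [Semiring K] [IsEmpty A] (M : OPM A) (h : A → B) (S : List A → K)
    (v : List B) : mapSeries M h S v = 0 :=
  finsum_mem_eq_zero_of_forall_eq_zero fun w hw => absurd (Subsingleton.elim w []) hw.1.1

/-- Regular (resp. strictly regular) series are closed under OPM-preserving projections. -/
theorem proj_regular {A B K : Type} [Fintype A] [Fintype B] [Semiring K]
    (M : OPM A) (M' : OPM B) (h : A → B) (hp : OPMPreserving M M' h)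
    (S : List A → K) :
    (Regular M S → Regular M' (mapSeries M h S)) ∧
    (StrictlyRegular M S → StrictlyRegular M' (mapSeries M h S)) := by
  rcases isEmpty_or_nonempty A with hA | ⟨⟨a₀⟩⟩
  · have hS : ∀ v ∈ OPWords M', mapSeries M h S v = behavior M' (WOPA.empty B K) v :=
      fun v _ => by rw [mapSeries_of_isEmpty, behavior_empty]
    exact ⟨fun _ => ⟨_, hS⟩, fun _ => ⟨_, fun t _ => Empty.elim t.1, hS⟩⟩
  · exact ⟨fun ⟨W, hW⟩ => ⟨W.proj h a₀, fun _ => mapSeries_eq_behavior_proj hp hW⟩,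
      fun ⟨W, hres, hW⟩ => ⟨W.proj h a₀, hres.proj, fun _ => mapSeries_eq_behavior_proj hp hW⟩⟩

end WOP
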